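/- Under the same Gaussian regression setup with uniform bound S, the squared Hellinger distance is lower bounded: ((1 − e^{−S²/(2σ²)})/(4S²)) · ‖G(F₁) − G(F₂)‖²_{L²(D)} ≤ h²(p_{F₁}, p_{F₂}). -/

import Mathlib

/-!
The Hellinger affinity `∫ √p₁ √p₂` of two Gaussians with variance `σ²` and means `m₁, m₂` is
`exp (-(m₁ - m₂)² / (8σ²))`, so the inner integral equals `2 - 2 exp (-(m₁ - m₂)² / (8σ²))`.
Since `t ↦ 1 - exp (-t)` is concave, it dominates its chord on `[0, S² / (2σ²)]`, which is a
linear lower bound in `(m₁ - m₂)² ≤ 4S²`; integrating over `μ` gives the claim.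
-/

open MeasureTheory Real

/-- The Gaussian regression density `y ↦ (2πσ²)^{-1/2} exp(-(y-m)²/(2σ²))`. -/
noncomputable def pdens (σ m y : ℝ) : ℝ :=
  (2 * Real.pi * σ ^ 2) ^ (-(1 / 2 : ℝ)) * Real.exp (-(y - m) ^ 2 / (2 * σ ^ 2))

open ProbabilityTheory

lemma pdens_nonneg (σ m y : ℝ) : 0 ≤ pdens σ m y := by
  unfold pdens; positivity

lemma pdens_eq_gaussianPDFReal (σ m : ℝ) :
    pdens σ m = gaussianPDFReal m ⟨σ ^ 2, sq_nonneg σ⟩ := by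
  funext y
  simp only [pdens, gaussianPDFReal]
  rw [rpow_neg (by positivity), ← sqrt_eq_rpow]
  rfl

lemma integrable_pdens (σ m : ℝ) : Integrable (pdens σ m) := by
  rw [pdens_eq_gaussianPDFReal]
  exact integrable_gaussianPDFReal m _

lemma integral_pdens {σ : ℝ} (hσ : σ ≠ 0) (m : ℝ) : ∫ y, pdens σ m y = 1 := by
  rw [pdens_eq_gaussianPDFReal]
  exact integral_gaussianPDFReal_eq_one m (NNReal.coe_ne_zero.1 (pow_ne_zero 2 hσ))

lemma pdens_mul_pdens (σ m₁ m₂ y : ℝ) :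
    pdens σ m₁ y * pdens σ m₂ y
      = (exp (-(m₁ - m₂) ^ 2 / (8 * σ ^ 2)) * pdens σ ((m₁ + m₂) / 2) y) ^ 2 := by
  have hexponent : -(y - m₁) ^ 2 / (2 * σ ^ 2) + -(y - m₂) ^ 2 / (2 * σ ^ 2)
      = 2 * (-(m₁ - m₂) ^ 2 / (8 * σ ^ 2)) + 2 * (-(y - (m₁ + m₂) / 2) ^ 2 / (2 * σ ^ 2)) := by
    ring
  calc pdens σ m₁ y * pdens σ m₂ y
      = ((2 * π * σ ^ 2) ^ (-(1 / 2 : ℝ))) ^ 2 *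
          exp (-(y - m₁) ^ 2 / (2 * σ ^ 2) + -(y - m₂) ^ 2 / (2 * σ ^ 2)) := by
        rw [pdens, pdens, exp_add]; ring
    _ = _ := by
        rw [hexponent, pdens]
        simp only [two_mul, exp_add]
        ring

lemma sqrt_pdens_mul_sqrt_pdens (σ m₁ m₂ y : ℝ) :
    √(pdens σ m₁ y) * √(pdens σ m₂ y)
      = exp (-(m₁ - m₂) ^ 2 / (8 * σ ^ 2)) * pdens σ ((m₁ + m₂) / 2) y := by
  rw [← sqrt_mul (pdens_nonneg _ _ _), pdens_mul_pdens]
  exact sqrt_sq (mul_nonneg (exp_pos _).le (pdens_nonneg _ _ _))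

lemma integral_sq_sub_sqrt_pdens {σ : ℝ} (hσ : σ ≠ 0) (m₁ m₂ : ℝ) :
    ∫ y, (√(pdens σ m₁ y) - √(pdens σ m₂ y)) ^ 2
      = 2 - 2 * exp (-(m₁ - m₂) ^ 2 / (8 * σ ^ 2)) := by
  have hexpand : ∀ y, (√(pdens σ m₁ y) - √(pdens σ m₂ y)) ^ 2
      = pdens σ m₁ y + pdens σ m₂ y
        - 2 * exp (-(m₁ - m₂) ^ 2 / (8 * σ ^ 2)) * pdens σ ((m₁ + m₂) / 2) y := fun y => by
    rw [sub_sq, sq_sqrt (pdens_nonneg _ _ _), sq_sqrt (pdens_nonneg _ _ _), mul_assoc,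
      sqrt_pdens_mul_sqrt_pdens]
    ring
  simp_rw [hexpand]
  have hsum : Integrable (fun y => pdens σ m₁ y + pdens σ m₂ y) :=
    (integrable_pdens σ m₁).add (integrable_pdens σ m₂)
  rw [integral_sub hsum ((integrable_pdens σ _).const_mul _),
    integral_add (integrable_pdens σ m₁) (integrable_pdens σ m₂), integral_const_mul,
    integral_pdens hσ, integral_pdens hσ, integral_pdens hσ]
  ring

lemma div_mul_one_sub_exp_neg_le {t T : ℝ} (hT : 0 < T) (ht : 0 ≤ t) (htT : t ≤ T) :
    t / T * (1 - exp (-T)) ≤ 1 - exp (-t) := by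
  have hconvex := convexOn_exp.2 (Set.mem_univ 0) (Set.mem_univ (-T))
    (sub_nonneg.2 ((div_le_one hT).2 htT)) (div_nonneg ht hT.le) (sub_add_cancel 1 (t / T))
  have hpoint : (1 - t / T) • (0 : ℝ) + (t / T) • (-T) = -t := by
    simp only [smul_eq_mul]
    field_simp
    ring
  rw [hpoint, smul_eq_mul, smul_eq_mul, exp_zero] at hconvex
  linarith

lemma mul_le_two_sub_two_mul_exp {σ S d : ℝ} (hσ : 0 < σ) (hS : 0 < S) (hd : 0 ≤ d)
    (hdS : d ≤ 4 * S ^ 2) :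
    ((1 - exp (-S ^ 2 / (2 * σ ^ 2))) / (4 * S ^ 2)) * d ≤ 2 - 2 * exp (-d / (8 * σ ^ 2)) := by
  have hchord := div_mul_one_sub_exp_neg_le (t := d / (8 * σ ^ 2)) (T := S ^ 2 / (2 * σ ^ 2))
    (by positivity) (by positivity) (by
      rw [div_le_div_iff₀ (by positivity) (by positivity)]; nlinarith)
  have hexp_le : exp (-(d / (8 * σ ^ 2))) ≤ 1 := exp_le_one_iff.2 (neg_nonpos.2 (by positivity))
  have hrewrite : (1 - exp (-S ^ 2 / (2 * σ ^ 2))) / (4 * S ^ 2) * d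
      = d / (8 * σ ^ 2) / (S ^ 2 / (2 * σ ^ 2)) * (1 - exp (-(S ^ 2 / (2 * σ ^ 2)))) := by
    rw [neg_div]
    field_simp
    ring
  rw [hrewrite, neg_div]
  linarith

lemma sq_sub_le_four_mul_sq {a b S : ℝ} (ha : |a| ≤ S) (hb : |b| ≤ S) :
    (a - b) ^ 2 ≤ 4 * S ^ 2 :=
  calc (a - b) ^ 2 = |a - b| ^ 2 := (sq_abs _).symm
    _ ≤ (2 * S) ^ 2 := pow_le_pow_left₀ (abs_nonneg _) (by linarith [abs_sub a b]) 2
    _ = 4 * S ^ 2 := by ring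

/-- Lower bound on the squared Hellinger distance between Gaussian regression
densities in terms of the `L²(D,μ)` distance of the uniformly bounded regression
functions. -/
theorem L2_le_hellinger_sq {D : Type*} [MeasurableSpace D] (μ : Measure D)
    [IsProbabilityMeasure μ] (σ S : ℝ) (hσ : 0 < σ) (hS : 0 < S)
    (g₁ g₂ : D → ℝ) (hg₁ : Measurable g₁) (hg₂ : Measurable g₂)
    (hb₁ : ∀ x, |g₁ x| ≤ S) (hb₂ : ∀ x, |g₂ x| ≤ S) :
    ((1 - Real.exp (-S ^ 2 / (2 * σ ^ 2))) / (4 * S ^ 2)) * ∫ x, (g₁ x - g₂ x) ^ 2 ∂μ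
      ≤ ∫ x, (∫ y, (Real.sqrt (pdens σ (g₁ x) y) - Real.sqrt (pdens σ (g₂ x) y)) ^ 2) ∂μ := by
  set c := (1 - Real.exp (-S ^ 2 / (2 * σ ^ 2))) / (4 * S ^ 2)
  have hsq_le : ∀ x, (g₁ x - g₂ x) ^ 2 ≤ 4 * S ^ 2 := fun x => sq_sub_le_four_mul_sq (hb₁ x) (hb₂ x)
  simp_rw [integral_sq_sub_sqrt_pdens hσ.ne']
  rw [← integral_const_mul]
  refine integral_mono ?_ ?_ fun x =>
    mul_le_two_sub_two_mul_exp hσ hS (sq_nonneg _) (hsq_le x)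
  · refine Integrable.of_bound (by fun_prop) (|c| * (4 * S ^ 2)) (ae_of_all _ fun x => ?_)
    rw [norm_mul, norm_of_nonneg (sq_nonneg _)]
    exact mul_le_mul_of_nonneg_left (hsq_le x) (abs_nonneg c)
  · refine Integrable.of_bound (by fun_prop) 2 (ae_of_all _ fun x => ?_)
    have hexp_le : exp (-(g₁ x - g₂ x) ^ 2 / (8 * σ ^ 2)) ≤ 1 :=
      exp_le_one_iff.2 (by rw [neg_div]; exact neg_nonpos.2 (by positivity))
    rw [norm_of_nonneg (by linarith)]
    linarith [exp_pos (-(g₁ x - g₂ x) ^ 2 / (8 * σ ^ 2))]
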